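/- Let Ω ⊆ Σ^{ℤ^d} be a shift space with the TMP and the pivot property, and let B_Sull(Ω) be the space of shift-invariant continuous cocycles on the asymptotic relation of Ω with the norm ‖ψ‖_Sull = sup_{x∈Ω} |ψ(x, ζ₀x)|. Then the map F : B_Sull(Ω) → C(Ω) given by F(ψ)(x) = ψ(x, ζ₀x) is an injective linear map whose image is closed in C(Ω) with respect to the uniform norm; consequently ‖·‖_Sull is a complete norm. -/

import Mathlib

open scoped Classical

/-- Configurations on `ℤ^d` over the alphabet `α`. -/
abbrev Config (d : ℕ) (α : Type*) := (Fin d → ℤ) → α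

/-- The shift of a configuration by `k ∈ ℤ^d`. -/
def shiftBy {d : ℕ} {α : Type*} (k : Fin d → ℤ) (x : Config d α) : Config d α :=
  fun i => x (i + k)

/-- Two configurations are asymptotic if they differ at finitely many sites. -/
def Asymptotic {d : ℕ} {α : Type*} (x y : Config d α) : Prop := {i | x i ≠ y i}.Finite

/-- Topological Markov property. -/
def TMP {d : ℕ} {α : Type*} (Ω : Set (Config d α)) : Prop :=
  ∀ A : Finset (Fin d → ℤ), ∃ B : Finset (Fin d → ℤ), A ⊆ B ∧
    ∀ x ∈ Ω, ∀ y ∈ Ω, (∀ i ∈ B, i ∉ A → x i = y i) →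
      (fun i => if i ∈ B then x i else y i) ∈ Ω

/-- Pivot property. -/
def PivotProperty {d : ℕ} {α : Type*} (Ω : Set (Config d α)) : Prop :=
  ∀ x ∈ Ω, ∀ y ∈ Ω, Asymptotic x y →
    ∃ (n : ℕ) (z : ℕ → Config d α), z 0 = x ∧ z n = y ∧ (∀ i ≤ n, z i ∈ Ω) ∧
      ∀ i < n, ∃ s : Fin d → ℤ, z i s ≠ z (i + 1) s ∧ ∀ t, t ≠ s → z i t = z (i + 1) t

/-- `ζ₀ x`: replace the symbol of `x` at the origin by the smallest symbol (w.r.t. the fixed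
total order on the alphabet) keeping the configuration in `Ω`. -/
noncomputable def zeta {d : ℕ} {α : Type*} [Fintype α] [LinearOrder α]
    (Ω : Set (Config d α)) (x : Config d α) : Config d α :=
  Function.update x 0 <|
    if h : (Finset.univ.filter
        fun a : α => Function.update x (0 : Fin d → ℤ) a ∈ Ω).Nonempty
    then (Finset.univ.filter
        fun a : α => Function.update x (0 : Fin d → ℤ) a ∈ Ω).min' h
    else x 0

/-- A shift-invariant continuous cocycle on the asymptotic relation of `Ω`. -/
def IsSullCocycle {d : ℕ} {α : Type*} [TopologicalSpace α]
    (Ω : Set (Config d α)) (ψ : Config d α → Config d α → ℝ) : Prop :=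
  (∀ x ∈ Ω, ∀ y ∈ Ω, ∀ z ∈ Ω, Asymptotic x y → Asymptotic y z →
      ψ x y + ψ y z = ψ x z)
  ∧ (∀ k : Fin d → ℤ, ∀ x ∈ Ω, ∀ y ∈ Ω, Asymptotic x y →
      ψ (shiftBy k x) (shiftBy k y) = ψ x y)
  ∧ (∀ A : Finset (Fin d → ℤ),
      ContinuousOn (fun p : Config d α × Config d α => ψ p.1 p.2)
        {p | p.1 ∈ Ω ∧ p.2 ∈ Ω ∧ ∀ i ∉ A, p.1 i = p.2 i})

/-!
Along a pivot path `x = z₀, …, zₙ = y` in `Ω`, where `zᵢ` and `zᵢ₊₁` differ only at `sᵢ`, the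
cocycle identity and shift invariance give `ψ(x, y) = ∑ᵢ (Fψ(σ^{sᵢ} zᵢ) - Fψ(σ^{sᵢ} zᵢ₊₁))`, so
`Fψ` determines `ψ`. If `Fψₜ → f` pointwise along some filter, the same sums for `f` are the limits
of `ψₜ(x, y)`, hence independent of the path; they define a shift-invariant cocycle `ψ` with
`Fψ = f`, continuous as soon as `f` is. This gives both the closedness of the image and the
completeness. Continuity of `Fψ` itself holds because, by the TMP, `ζ₀` is locally constant at
the origin.
-/

open Filter Topology

namespace Asymptotic

variable {d : ℕ} {α : Type*} {x y z : Config d α}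

theorem of_eq_off {s : Set (Fin d → ℤ)} (hs : s.Finite) (h : ∀ i ∉ s, x i = y i) :
    Asymptotic x y :=
  hs.subset fun i => not_imp_comm.1 (h i)

protected theorem refl (x : Config d α) : Asymptotic x x :=
  of_eq_off Set.finite_empty fun _ _ => rfl

protected theorem symm (h : Asymptotic x y) : Asymptotic y x :=
  Set.Finite.subset h fun _ hi => Ne.symm hi

protected theorem trans (hxy : Asymptotic x y) (hyz : Asymptotic y z) : Asymptotic x z :=
  of_eq_off (Set.Finite.union hxy hyz) fun i hi => by
    obtain ⟨hxy, hyz⟩ := not_or.1 hi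
    exact (not_not.1 hxy : x i = y i).trans (not_not.1 hyz)

protected theorem shiftBy (k : Fin d → ℤ) (h : Asymptotic x y) :
    Asymptotic (shiftBy k x) (shiftBy k y) :=
  Set.Finite.preimage (add_left_injective k).injOn h

end Asymptotic

theorem eventually_forall_mem_eq {ι X : Type*} [TopologicalSpace X] [DiscreteTopology X]
    (x : ι → X) (B : Finset ι) : ∀ᶠ u in 𝓝 x, ∀ j ∈ B, u j = x j :=
  (eventually_all_finset B).2 fun j _ =>
    tendsto_pure.1 (by simpa only [nhds_discrete] using (continuous_apply j).tendsto x)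

theorem continuous_finset_piecewise {ι X : Type*} [TopologicalSpace X] [DecidableEq ι]
    (B : Finset ι) (w : ι → X) : Continuous fun u : ι → X => B.piecewise w u :=
  continuous_pi fun j => by
    by_cases hj : j ∈ B
    · simp only [Finset.piecewise_eq_of_mem _ _ _ hj, continuous_const]
    · simpa only [Finset.piecewise_eq_of_notMem _ _ _ hj] using continuous_apply j

section Zeta

variable {d : ℕ} {α : Type*} {Ω : Set (Config d α)} {x y : Config d α}

theorem TMP.exists_update_mem_iff (htmp : TMP Ω) :
    ∃ B : Finset (Fin d → ℤ), ∀ x ∈ Ω, ∀ y ∈ Ω, (∀ j ∈ B, x j = y j) →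
      ∀ a, Function.update x 0 a ∈ Ω ↔ Function.update y 0 a ∈ Ω := by
  obtain ⟨B, hB0, hB⟩ := htmp {0}
  have h0 : (0 : Fin d → ℤ) ∈ B := hB0 (Finset.mem_singleton_self 0)
  have key : ∀ x ∈ Ω, ∀ y ∈ Ω, (∀ j ∈ B, x j = y j) →
      ∀ a, Function.update x 0 a ∈ Ω → Function.update y 0 a ∈ Ω := by
    intro x _ y hy hxy a hxa
    convert hB _ hxa y hy fun i hiB hi0 => ?_ using 1
    · funext i
      by_cases hi : i = 0
      · simp [hi, h0]
      · by_cases hiB : i ∈ B <;> simp [hi, hiB, hxy]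
    · rw [Function.update_of_ne (by simpa using hi0)]
      exact hxy i hiB
  exact ⟨B, fun x hx y hy hxy a =>
    ⟨key x hx y hy hxy a, key y hy x hx (fun j hj => (hxy j hj).symm) a⟩⟩

theorem nonempty_filter_update_mem [Fintype α] (hx : x ∈ Ω) :
    (Finset.univ.filter fun a : α => Function.update x (0 : Fin d → ℤ) a ∈ Ω).Nonempty :=
  ⟨x 0, by simpa⟩

variable [Fintype α] [LinearOrder α]

theorem zeta_apply_of_ne (x : Config d α) {i : Fin d → ℤ} (hi : i ≠ 0) : zeta Ω x i = x i := by
  rw [zeta, Function.update_of_ne hi]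

theorem asymptotic_zeta (x : Config d α) : Asymptotic x (zeta Ω x) :=
  Asymptotic.of_eq_off (Set.finite_singleton 0) fun _ hi => (zeta_apply_of_ne (Ω := Ω) x hi).symm

theorem zeta_mem (hx : x ∈ Ω) : zeta Ω x ∈ Ω := by
  rw [zeta, dif_pos (nonempty_filter_update_mem hx)]
  exact (Finset.mem_filter.1 (Finset.min'_mem _ (nonempty_filter_update_mem hx))).2

theorem zeta_apply_zero_eq (hx : x ∈ Ω) (hy : y ∈ Ω)
    (h : ∀ a, Function.update x 0 a ∈ Ω ↔ Function.update y 0 a ∈ Ω) :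
    zeta Ω x 0 = zeta Ω y 0 := by
  have hset : (Finset.univ.filter fun a : α => Function.update x (0 : Fin d → ℤ) a ∈ Ω)
      = Finset.univ.filter fun a : α => Function.update y (0 : Fin d → ℤ) a ∈ Ω :=
    Finset.filter_congr fun a _ => h a
  rw [zeta, zeta, Function.update_self, Function.update_self,
    dif_pos (nonempty_filter_update_mem hx), dif_pos (nonempty_filter_update_mem hy)]
  simp only [hset]

theorem zeta_eq_of_eq_off_zero (hx : x ∈ Ω) (hy : y ∈ Ω) (h : ∀ t ≠ 0, x t = y t) :
    zeta Ω x = zeta Ω y := by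
  have hupdate : ∀ a, Function.update x (0 : Fin d → ℤ) a = Function.update y 0 a := fun a =>
    funext fun t => by
      by_cases ht : t = 0
      · simp [ht]
      · simp [ht, h t ht]
  funext t
  by_cases ht : t = 0
  · subst ht
    exact zeta_apply_zero_eq hx hy fun a => by rw [hupdate]
  · rw [zeta_apply_of_ne x ht, zeta_apply_of_ne y ht, h t ht]

theorem continuousOn_zeta [TopologicalSpace α] [DiscreteTopology α] (htmp : TMP Ω) :
    ContinuousOn (zeta Ω) Ω := by
  obtain ⟨B, hB⟩ := htmp.exists_update_mem_iff
  refine continuousOn_pi.2 fun j => ?_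
  by_cases hj : j = 0
  · subst hj
    refine fun x hx => tendsto_const_nhds.congr' ?_
    filter_upwards [mem_nhdsWithin_of_mem_nhds (eventually_forall_mem_eq x B),
      self_mem_nhdsWithin] with u hux hu
    exact zeta_apply_zero_eq hx hu (hB x hx u hu fun j hj => (hux j hj).symm)
  · simpa only [zeta_apply_of_ne _ hj] using (continuous_apply j).continuousOn

end Zeta

structure PivotPath {d : ℕ} {α : Type*} (Ω : Set (Config d α)) (x y : Config d α) where
  length : ℕ
  config : ℕ → Config d α
  site : ℕ → Fin d → ℤ
  config_zero : config 0 = x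
  config_length : config length = y
  config_mem : ∀ i ≤ length, config i ∈ Ω
  config_succ : ∀ i < length, ∀ t ≠ site i, config i t = config (i + 1) t

section PivotPaths

variable {d : ℕ} {α : Type*} {Ω : Set (Config d α)} {x y : Config d α}

theorem PivotProperty.nonempty_pivotPath (hpivot : PivotProperty Ω) (hx : x ∈ Ω) (hy : y ∈ Ω)
    (hxy : Asymptotic x y) : Nonempty (PivotPath Ω x y) := by
  obtain ⟨n, z, h0, hn, hmem, hstep⟩ := hpivot x hx y hy hxy
  choose! s hs using hstep
  exact ⟨⟨n, z, s, h0, hn, hmem, fun i hi => (hs i hi).2⟩⟩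

namespace PivotPath

theorem mem_left (γ : PivotPath Ω x y) : x ∈ Ω := γ.config_zero ▸ γ.config_mem 0 (Nat.zero_le _)

variable (γ : PivotPath Ω x y)

def sites : Finset (Fin d → ℤ) := (Finset.range γ.length).image γ.site

theorem config_eq_of_notMem_sites {i : ℕ} (hi : i ≤ γ.length) {j : Fin d → ℤ}
    (hj : j ∉ γ.sites) : γ.config i j = x j := by
  induction i with
  | zero => rw [γ.config_zero]
  | succ i ih =>
    have hsite : j ≠ γ.site i := fun h => hj (Finset.mem_image.2 ⟨i, by simpa using hi, h.symm⟩)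
    rw [← γ.config_succ i hi j hsite, ih (Nat.le_of_succ_le hi)]

theorem asymptotic_config {i : ℕ} (hi : i ≤ γ.length) : Asymptotic x (γ.config i) :=
  .of_eq_off γ.sites.finite_toSet fun _ hj => (γ.config_eq_of_notMem_sites hi hj).symm

def sum (F : Config d α → ℝ) : ℝ :=
  ∑ i ∈ Finset.range γ.length,
    (F (shiftBy (γ.site i) (γ.config i)) - F (shiftBy (γ.site i) (γ.config (i + 1))))

theorem sum_congr (hshift : ∀ k : Fin d → ℤ, ∀ x ∈ Ω, shiftBy k x ∈ Ω)
    {F G : Config d α → ℝ} (h : ∀ x ∈ Ω, F x = G x) : γ.sum F = γ.sum G :=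
  Finset.sum_congr rfl fun i hi => by
    have hi := Finset.mem_range.1 hi
    rw [h _ (hshift _ _ (γ.config_mem i hi.le)), h _ (hshift _ _ (γ.config_mem (i + 1) hi))]

def piecewise (B : Finset (Fin d → ℤ)) {u v : Config d α} (hu : ∀ j ∈ B, u j = x j)
    (hv : ∀ j ∈ B, v j = y j) (huv : ∀ j ∉ B, u j = v j)
    (hmem : ∀ i ≤ γ.length, B.piecewise (γ.config i) u ∈ Ω) : PivotPath Ω u v where
  length := γ.length
  config i := B.piecewise (γ.config i) u
  site := γ.site
  config_zero := funext fun j => by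
    by_cases hj : j ∈ B <;> simp [hj, γ.config_zero, hu]
  config_length := funext fun j => by
    by_cases hj : j ∈ B <;> simp [hj, γ.config_length, hv, huv]
  config_mem := hmem
  config_succ i hi t ht := by
    by_cases htB : t ∈ B <;> simp [htB, γ.config_succ i hi t ht]

theorem piecewise_config_mem {A B : Finset (Fin d → ℤ)}
    (hB : ∀ x ∈ Ω, ∀ y ∈ Ω, (∀ i ∈ B, i ∉ A → x i = y i) →
      (fun i => if i ∈ B then x i else y i) ∈ Ω)
    (hA : γ.sites ⊆ A) {u : Config d α} (hu : u ∈ Ω) (hux : ∀ j ∈ B, u j = x j) {i : ℕ}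
    (hi : i ≤ γ.length) : B.piecewise (γ.config i) u ∈ Ω :=
  hB _ (γ.config_mem i hi) u hu fun j hjB hjA =>
    (γ.config_eq_of_notMem_sites hi fun h => hjA (hA h)).trans (hux j hjB).symm

theorem continuousOn_sum_piecewise [TopologicalSpace α]
    (hshift : ∀ k : Fin d → ℤ, ∀ x ∈ Ω, shiftBy k x ∈ Ω) {F : Config d α → ℝ}
    (hF : ContinuousOn F Ω) {B : Finset (Fin d → ℤ)} {W : Set (Config d α)}
    (hmem : ∀ u ∈ W, ∀ i ≤ γ.length, B.piecewise (γ.config i) u ∈ Ω) :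
    ContinuousOn (fun u => ∑ i ∈ Finset.range γ.length,
      (F (shiftBy (γ.site i) (B.piecewise (γ.config i) u))
        - F (shiftBy (γ.site i) (B.piecewise (γ.config (i + 1)) u)))) W := by
  have hterm : ∀ i ≤ γ.length, ∀ k,
      ContinuousOn (fun u => F (shiftBy k (B.piecewise (γ.config i) u))) W := fun i hi k =>
    hF.comp ((continuous_pi fun j => continuous_apply (j + k)).comp
      (continuous_finset_piecewise B _)).continuousOn fun u hu => hshift k _ (hmem u hu i hi)
  exact continuousOn_finsetSum _ fun i hi =>
    (hterm i (Finset.mem_range.1 hi).le _).sub (hterm (i + 1) (Finset.mem_range.1 hi) _)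

end PivotPath

end PivotPaths

section Sullivan

variable {d : ℕ} {α : Type*} {Ω : Set (Config d α)} {x y : Config d α}

namespace IsSullCocycle

variable [TopologicalSpace α] {ψ : Config d α → Config d α → ℝ}

theorem apply_self (hψ : IsSullCocycle Ω ψ) (hx : x ∈ Ω) : ψ x x = 0 := by
  have := hψ.1 x hx x hx x hx (.refl x) (.refl x)
  linarith

theorem apply_swap (hψ : IsSullCocycle Ω ψ) (hx : x ∈ Ω) (hy : y ∈ Ω) (hxy : Asymptotic x y) :
    ψ y x = -ψ x y := by
  have := hψ.1 x hx y hy x hx hxy hxy.symm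
  rw [hψ.apply_self hx] at this
  linarith

end IsSullCocycle

variable [Fintype α] [LinearOrder α]

/-- The map `F` of the paper. -/
noncomputable def sullivanFun (Ω : Set (Config d α)) (ψ : Config d α → Config d α → ℝ) :
    Config d α → ℝ :=
  fun x => ψ x (zeta Ω x)

namespace IsSullCocycle

variable [TopologicalSpace α] {ψ : Config d α → Config d α → ℝ}

/-- Shifting `s` to the origin, `ζ₀` no longer sees where `x` and `y` differ. -/
theorem apply_eq_sub_of_eq_off (hψ : IsSullCocycle Ω ψ)
    (hshift : ∀ k : Fin d → ℤ, ∀ x ∈ Ω, shiftBy k x ∈ Ω) (hx : x ∈ Ω) (hy : y ∈ Ω)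
    {s : Fin d → ℤ} (h : ∀ t ≠ s, x t = y t) :
    ψ x y = sullivanFun Ω ψ (shiftBy s x) - sullivanFun Ω ψ (shiftBy s y) := by
  have hxy : Asymptotic x y := .of_eq_off (Set.finite_singleton s) h
  have hx' := hshift s x hx
  have hy' := hshift s y hy
  have hζ : zeta Ω (shiftBy s x) = zeta Ω (shiftBy s y) :=
    zeta_eq_of_eq_off_zero hx' hy' fun t ht => h (t + s) (by simpa using ht)
  have hy'ζ : Asymptotic (shiftBy s y) (zeta Ω (shiftBy s x)) := hζ ▸ asymptotic_zeta _
  calc ψ x y = ψ (shiftBy s x) (shiftBy s y) := (hψ.2.1 s x hx y hy hxy).symm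
    _ = ψ (shiftBy s x) (zeta Ω (shiftBy s x)) + ψ (zeta Ω (shiftBy s x)) (shiftBy s y) :=
      (hψ.1 _ hx' _ (zeta_mem hx') _ hy' (asymptotic_zeta _) hy'ζ.symm).symm
    _ = _ := by
      rw [hψ.apply_swap hy' (zeta_mem hx') hy'ζ, sullivanFun, sullivanFun, hζ]
      ring

theorem eq_sum (hψ : IsSullCocycle Ω ψ) (hshift : ∀ k : Fin d → ℤ, ∀ x ∈ Ω, shiftBy k x ∈ Ω)
    (γ : PivotPath Ω x y) : ψ x y = γ.sum (sullivanFun Ω ψ) := by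
  have hx := γ.mem_left
  have key : ∀ m ≤ γ.length, ψ x (γ.config m) = ∑ i ∈ Finset.range m,
      (sullivanFun Ω ψ (shiftBy (γ.site i) (γ.config i))
        - sullivanFun Ω ψ (shiftBy (γ.site i) (γ.config (i + 1)))) := by
    intro m hm
    induction m with
    | zero => rw [γ.config_zero, hψ.apply_self hx, Finset.sum_range_zero]
    | succ m ih =>
      have hm' : m < γ.length := hm
      have hz := γ.config_mem m hm'.le
      have hz' := γ.config_mem (m + 1) hm
      rw [Finset.sum_range_succ, ← ih hm'.le,
        ← hψ.apply_eq_sub_of_eq_off hshift hz hz' (γ.config_succ m hm')]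
      exact hψ.1 x hx _ hz _ hz' (γ.asymptotic_config hm'.le)
        (.of_eq_off (Set.finite_singleton _) (γ.config_succ m hm')) |>.symm
  have := key γ.length le_rfl
  rwa [γ.config_length] at this

theorem continuousOn_sullivanFun [DiscreteTopology α] (htmp : TMP Ω)
    (hψ : IsSullCocycle Ω ψ) : ContinuousOn (sullivanFun Ω ψ) Ω :=
  (hψ.2.2 {0}).comp (continuousOn_id.prodMk (continuousOn_zeta htmp)) fun x hx =>
    ⟨hx, zeta_mem hx, fun _ hi => (zeta_apply_of_ne x (Finset.notMem_singleton.1 hi)).symm⟩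

end IsSullCocycle

end Sullivan

section Limit

variable {d : ℕ} {α : Type*} {Ω : Set (Config d α)} {x y : Config d α}

/-- By the TMP, a pivot path from `x` to `y` can be glued into every pair `(u, v)` close to
`(x, y)`, and the sum along the glued path is continuous in `u`. -/
theorem continuousOn_of_forall_eq_sum [TopologicalSpace α] [DiscreteTopology α]
    (hshift : ∀ k : Fin d → ℤ, ∀ x ∈ Ω, shiftBy k x ∈ Ω) (htmp : TMP Ω)
    (hpivot : PivotProperty Ω) {F : Config d α → ℝ} (hF : ContinuousOn F Ω)
    {φ : Config d α → Config d α → ℝ} (hφ : ∀ x y (γ : PivotPath Ω x y), φ x y = γ.sum F)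
    (A : Finset (Fin d → ℤ)) :
    ContinuousOn (fun p : Config d α × Config d α => φ p.1 p.2)
      {p | p.1 ∈ Ω ∧ p.2 ∈ Ω ∧ ∀ i ∉ A, p.1 i = p.2 i} := by
  rintro ⟨x, y⟩ ⟨hx, hy, hxy⟩
  obtain ⟨γ⟩ := hpivot.nonempty_pivotPath hx hy (.of_eq_off A.finite_toSet hxy)
  obtain ⟨B, hAB, hB⟩ := htmp (A ∪ γ.sites)
  have hmem : ∀ u ∈ Ω ∩ {u | ∀ j ∈ B, u j = x j}, ∀ i ≤ γ.length,
      B.piecewise (γ.config i) u ∈ Ω := fun u hu _ hi =>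
    γ.piecewise_config_mem hB Finset.subset_union_right hu.1 hu.2 hi
  have hcont := ((γ.continuousOn_sum_piecewise hshift hF hmem).continuousWithinAt
    ⟨hx, fun _ _ => rfl⟩).mono_of_mem_nhdsWithin
      (inter_mem_nhdsWithin Ω (eventually_forall_mem_eq x B))
  refine (hcont.comp continuousWithinAt_fst fun p hp => hp.1).congr_of_eventuallyEq_of_mem ?_
    ⟨hx, hy, hxy⟩
  filter_upwards [self_mem_nhdsWithin, mem_nhdsWithin_of_mem_nhds
    ((eventually_forall_mem_eq x B).prod_nhds (eventually_forall_mem_eq y B))]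
    with ⟨u, v⟩ ⟨hu, _, huv⟩ ⟨hux, hvy⟩
  exact hφ u v (γ.piecewise B hux hvy
    (fun j hj => huv j fun hjA => hj (hAB (Finset.mem_union_left _ hjA))) (hmem u ⟨hu, hux⟩))

noncomputable def pathCocycle (Ω : Set (Config d α)) (F : Config d α → ℝ) (x y : Config d α) :
    ℝ :=
  if h : Nonempty (PivotPath Ω x y) then h.some.sum F else 0

variable [Fintype α] [LinearOrder α] [TopologicalSpace α] {ι : Type*} {l : Filter ι}
  {ψ : ι → Config d α → Config d α → ℝ} {F : Config d α → ℝ}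

theorem tendsto_apply_of_tendsto_sullivanFun (hψ : ∀ t, IsSullCocycle Ω (ψ t))
    (hshift : ∀ k : Fin d → ℤ, ∀ x ∈ Ω, shiftBy k x ∈ Ω)
    (hconv : ∀ x ∈ Ω, Tendsto (fun t => sullivanFun Ω (ψ t) x) l (𝓝 (F x)))
    (γ : PivotPath Ω x y) : Tendsto (fun t => ψ t x y) l (𝓝 (γ.sum F)) := by
  refine Tendsto.congr (fun t => ((hψ t).eq_sum hshift γ).symm) ?_
  exact tendsto_finsetSum _ fun i hi =>
    (hconv _ (hshift _ _ (γ.config_mem i (Finset.mem_range.1 hi).le))).sub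
      (hconv _ (hshift _ _ (γ.config_mem (i + 1) (Finset.mem_range.1 hi))))

theorem exists_isSullCocycle_sullivanFun_eq_of_tendsto [DiscreteTopology α] [l.NeBot]
    (hshift : ∀ k : Fin d → ℤ, ∀ x ∈ Ω, shiftBy k x ∈ Ω) (htmp : TMP Ω)
    (hpivot : PivotProperty Ω) (hψ : ∀ t, IsSullCocycle Ω (ψ t)) (hF : ContinuousOn F Ω)
    (hconv : ∀ x ∈ Ω, Tendsto (fun t => sullivanFun Ω (ψ t) x) l (𝓝 (F x))) :
    ∃ φ, IsSullCocycle Ω φ ∧ ∀ x ∈ Ω, sullivanFun Ω φ x = F x := by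
  have hsum : ∀ x y (γ : PivotPath Ω x y), pathCocycle Ω F x y = γ.sum F := fun x y γ => by
    have hne : Nonempty (PivotPath Ω x y) := ⟨γ⟩
    rw [pathCocycle, dif_pos hne]
    exact tendsto_nhds_unique (tendsto_apply_of_tendsto_sullivanFun hψ hshift hconv hne.some)
      (tendsto_apply_of_tendsto_sullivanFun hψ hshift hconv γ)
  have hlim : ∀ x ∈ Ω, ∀ y ∈ Ω, Asymptotic x y →
      Tendsto (fun t => ψ t x y) l (𝓝 (pathCocycle Ω F x y)) := fun x hx y hy hxy => by
    obtain ⟨γ⟩ := hpivot.nonempty_pivotPath hx hy hxy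
    rw [hsum x y γ]
    exact tendsto_apply_of_tendsto_sullivanFun hψ hshift hconv γ
  refine ⟨pathCocycle Ω F, ⟨?_, ?_, continuousOn_of_forall_eq_sum hshift htmp hpivot hF hsum⟩,
    fun x hx => ?_⟩
  · intro x hx y hy z hz hxy hyz
    exact tendsto_nhds_unique (((hlim x hx y hy hxy).add (hlim y hy z hz hyz)).congr
      fun t => (hψ t).1 x hx y hy z hz hxy hyz) (hlim x hx z hz (hxy.trans hyz))
  · intro k x hx y hy hxy
    exact tendsto_nhds_unique ((hlim _ (hshift k x hx) _ (hshift k y hy) (hxy.shiftBy k)).congr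
      fun t => (hψ t).2.1 k x hx y hy hxy) (hlim x hx y hy hxy)
  · exact tendsto_nhds_unique (hlim x hx _ (zeta_mem hx) (asymptotic_zeta x)) (hconv x hx)

end Limit

theorem ContinuousMap.exists_continuousOn_eq {X Y : Type*} [TopologicalSpace X]
    [TopologicalSpace Y] [Zero Y] {s : Set X} (f : C(s, Y)) :
    ∃ F : X → Y, ContinuousOn F s ∧ ∀ x : s, F x = f x := by
  refine ⟨fun x => if h : x ∈ s then f ⟨x, h⟩ else 0, ?_, fun x => dif_pos x.2⟩
  rw [continuousOn_iff_continuous_domRestrict]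
  convert f.continuous
  exact funext fun x => dif_pos x.2

section Image

variable {d : ℕ} {α : Type*} [Fintype α] [LinearOrder α] [TopologicalSpace α]
  [DiscreteTopology α] {Ω : Set (Config d α)}

theorem isClosed_setOf_eq_sullivanFun (hshift : ∀ k : Fin d → ℤ, ∀ x ∈ Ω, shiftBy k x ∈ Ω)
    (htmp : TMP Ω) (hpivot : PivotProperty Ω) :
    IsClosed {f : C(↥Ω, ℝ) | ∃ ψ : Config d α → Config d α → ℝ,
        IsSullCocycle Ω ψ ∧ ∀ x : ↥Ω, f x = ψ (x : Config d α) (zeta Ω (x : Config d α))} := by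
  set S := {f : C(↥Ω, ℝ) | ∃ ψ : Config d α → Config d α → ℝ,
    IsSullCocycle Ω ψ ∧ ∀ x : ↥Ω, f x = ψ (x : Config d α) (zeta Ω (x : Config d α))}
  refine isClosed_of_closure_subset fun f hf => ?_
  have := mem_closure_iff_comap_neBot.1 hf
  choose ψ hψ hψf using fun g : S => g.2
  obtain ⟨F, hF, hFf⟩ := f.exists_continuousOn_eq
  have hconv : ∀ x ∈ Ω, Tendsto (fun g => sullivanFun Ω (ψ g) x)
      (comap (↑) (𝓝 f)) (𝓝 (F x)) := fun x hx => by
    simp only [sullivanFun, ← hψf _ ⟨x, hx⟩, hFf ⟨x, hx⟩]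
    exact ((continuous_eval_const _).tendsto f).comp tendsto_comap
  obtain ⟨φ, hφ, hφF⟩ :=
    exists_isSullCocycle_sullivanFun_eq_of_tendsto hshift htmp hpivot hψ hF hconv
  exact ⟨φ, hφ, fun x => (hFf x).symm.trans (hφF x x.2).symm⟩

theorem exists_isSullCocycle_tendsto_of_cauchy
    (hshift : ∀ k : Fin d → ℤ, ∀ x ∈ Ω, shiftBy k x ∈ Ω) (htmp : TMP Ω)
    (hpivot : PivotProperty Ω) (ψ : ℕ → Config d α → Config d α → ℝ)
    (hψ : ∀ t, IsSullCocycle Ω (ψ t))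
    (hcauchy : ∀ ε > (0 : ℝ), ∃ N : ℕ, ∀ s ≥ N, ∀ t ≥ N, ∀ x ∈ Ω,
      |ψ s x (zeta Ω x) - ψ t x (zeta Ω x)| ≤ ε) :
    ∃ φ : Config d α → Config d α → ℝ, IsSullCocycle Ω φ ∧
      ∀ ε > (0 : ℝ), ∃ N : ℕ, ∀ t ≥ N, ∀ x ∈ Ω, |ψ t x (zeta Ω x) - φ x (zeta Ω x)| ≤ ε := by
  have hU : UniformCauchySeqOn (fun t => sullivanFun Ω (ψ t)) atTop Ω :=
    Metric.uniformCauchySeqOn_iff.2 fun ε hε => (hcauchy (ε / 2) (half_pos hε)).imp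
      fun _ hN m hm n hn x hx => (hN m hm n hn x hx).trans_lt (half_lt_self hε)
  have hconv : ∀ x ∈ Ω, Tendsto (fun t => sullivanFun Ω (ψ t) x) atTop
      (𝓝 (limUnder atTop fun t => sullivanFun Ω (ψ t) x)) := fun _ hx =>
    (hU.cauchySeq hx).tendsto_limUnder
  have hT := hU.tendstoUniformlyOn_of_tendsto hconv
  obtain ⟨φ, hφ, hφF⟩ := exists_isSullCocycle_sullivanFun_eq_of_tendsto hshift htmp hpivot hψ
    (hT.continuousOn (.of_forall fun t => (hψ t).continuousOn_sullivanFun htmp)) hconv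
  refine ⟨φ, hφ, fun ε hε => ?_⟩
  obtain ⟨N, hN⟩ := eventually_atTop.1 (Metric.tendstoUniformlyOn_iff.1 hT ε hε)
  refine ⟨N, fun t ht x hx => ?_⟩
  have := hN t ht x hx
  rw [← hφF x hx, dist_comm, Real.dist_eq] at this
  exact this.le

end Image

theorem stmt_19_general {d : ℕ} {α : Type*} [Fintype α] [LinearOrder α]
    [TopologicalSpace α] [DiscreteTopology α]
    (Ω : Set (Config d α))
    (hshift : ∀ k : Fin d → ℤ, ∀ x ∈ Ω, shiftBy k x ∈ Ω)
    (htmp : TMP Ω) (hpivot : PivotProperty Ω) :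
    -- `F` maps into `C(Ω)`:
    (∀ ψ : Config d α → Config d α → ℝ, IsSullCocycle Ω ψ →
        ContinuousOn (fun x => ψ x (zeta Ω x)) Ω)
    -- `F` is injective (equivalently, by linearity, has trivial kernel):
    ∧ (∀ ψ₁ ψ₂ : Config d α → Config d α → ℝ, IsSullCocycle Ω ψ₁ → IsSullCocycle Ω ψ₂ →
        (∀ x ∈ Ω, ψ₁ x (zeta Ω x) = ψ₂ x (zeta Ω x)) →
        ∀ x ∈ Ω, ∀ y ∈ Ω, Asymptotic x y → ψ₁ x y = ψ₂ x y)
    -- the image of `F` is a closed subspace of `C(Ω)` with the uniform norm: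
    ∧ IsClosed {f : C(↥Ω, ℝ) | ∃ ψ : Config d α → Config d α → ℝ,
        IsSullCocycle Ω ψ ∧ ∀ x : ↥Ω, f x = ψ (x : Config d α) (zeta Ω (x : Config d α))}
    -- consequently the Sullivan norm is complete: every Cauchy sequence of shift-invariant
    -- continuous cocycles converges in the Sullivan norm to such a cocycle:
    ∧ (∀ ψseq : ℕ → Config d α → Config d α → ℝ,
        (∀ t, IsSullCocycle Ω (ψseq t)) →
        (∀ ε > (0 : ℝ), ∃ N : ℕ, ∀ s ≥ N, ∀ t ≥ N, ∀ x ∈ Ω,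
          |ψseq s x (zeta Ω x) - ψseq t x (zeta Ω x)| ≤ ε) →
        ∃ ψ : Config d α → Config d α → ℝ, IsSullCocycle Ω ψ ∧
          ∀ ε > (0 : ℝ), ∃ N : ℕ, ∀ t ≥ N, ∀ x ∈ Ω,
            |ψseq t x (zeta Ω x) - ψ x (zeta Ω x)| ≤ ε) := by
  refine ⟨fun ψ hψ => hψ.continuousOn_sullivanFun htmp, ?_,
    isClosed_setOf_eq_sullivanFun hshift htmp hpivot,
    exists_isSullCocycle_tendsto_of_cauchy hshift htmp hpivot⟩
  intro ψ₁ ψ₂ h₁ h₂ heq x hx y hy hxy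
  obtain ⟨γ⟩ := hpivot.nonempty_pivotPath hx hy hxy
  rw [h₁.eq_sum hshift γ, h₂.eq_sum hshift γ]
  exact γ.sum_congr hshift heq

/-- for a shift space `Ω` with the TMP and the pivot property, the map
`F(ψ)(x) = ψ(x, ζ₀x)` on shift-invariant continuous cocycles is (well-defined into `C(Ω)`,)
injective and linear, with closed image in `C(Ω)`; consequently the Sullivan norm
`‖ψ‖_Sull = sup_{x∈Ω} |ψ(x, ζ₀x)|` is complete. -/
theorem stmt_19 {d : ℕ} {α : Type*} [Fintype α] [LinearOrder α] [Nonempty α]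
    [TopologicalSpace α] [DiscreteTopology α]
    (Ω : Set (Config d α)) (hne : Ω.Nonempty) (hclosed : IsClosed Ω)
    (hshift : ∀ k : Fin d → ℤ, ∀ x ∈ Ω, shiftBy k x ∈ Ω)
    (htmp : TMP Ω) (hpivot : PivotProperty Ω) :
    -- `F` maps into `C(Ω)`:
    (∀ ψ : Config d α → Config d α → ℝ, IsSullCocycle Ω ψ →
        ContinuousOn (fun x => ψ x (zeta Ω x)) Ω)
    -- `F` is injective (equivalently, by linearity, has trivial kernel):
    ∧ (∀ ψ₁ ψ₂ : Config d α → Config d α → ℝ, IsSullCocycle Ω ψ₁ → IsSullCocycle Ω ψ₂ →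
        (∀ x ∈ Ω, ψ₁ x (zeta Ω x) = ψ₂ x (zeta Ω x)) →
        ∀ x ∈ Ω, ∀ y ∈ Ω, Asymptotic x y → ψ₁ x y = ψ₂ x y)
    -- the image of `F` is a closed subspace of `C(Ω)` with the uniform norm:
    ∧ IsClosed {f : C(↥Ω, ℝ) | ∃ ψ : Config d α → Config d α → ℝ,
        IsSullCocycle Ω ψ ∧ ∀ x : ↥Ω, f x = ψ (x : Config d α) (zeta Ω (x : Config d α))}
    -- consequently the Sullivan norm is complete: every Cauchy sequence of shift-invariant
    -- continuous cocycles converges in the Sullivan norm to such a cocycle: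
    ∧ (∀ ψseq : ℕ → Config d α → Config d α → ℝ,
        (∀ t, IsSullCocycle Ω (ψseq t)) →
        (∀ ε > (0 : ℝ), ∃ N : ℕ, ∀ s ≥ N, ∀ t ≥ N, ∀ x ∈ Ω,
          |ψseq s x (zeta Ω x) - ψseq t x (zeta Ω x)| ≤ ε) →
        ∃ ψ : Config d α → Config d α → ℝ, IsSullCocycle Ω ψ ∧
          ∀ ε > (0 : ℝ), ∃ N : ℕ, ∀ t ≥ N, ∀ x ∈ Ω,
            |ψseq t x (zeta Ω x) - ψ x (zeta Ω x)| ≤ ε) :=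
  stmt_19_general Ω hshift htmp hpivot
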